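/- arXiv:2602.04658 — 10 statements merged into one kernel-verified Lean document; each statement's English description precedes it below -/
import Mathlib

section
/- In a Courant algebroid (E, ⟨·,·⟩, ρ, [·,·], D) over O in which E is a faithful O-module, the anchor map preserves brackets: for all u, v ∈ E and all f ∈ O one has ρ([u,v]) f = ρ(u)(ρ(v) f) − ρ(v)(ρ(u) f); equivalently, the curvature R(u,v) vanishes for all u, v ∈ E. (First assertion of the paper's Lemma on the tangent complex of a Courant algebroid.) -/
theorem courant_anchor_preserves_brackets
    {k : Type*} [CommRing k] {O : Type*} [CommRing O] [Algebra k O]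
    {E : Type*} [AddCommGroup E] [Module k E] [Module O E] [IsScalarTower k O E]
    (P : E →ₗ[O] E →ₗ[O] O) (ρ : E →ₗ[O] Derivation k O O)
    (br : E →ₗ[k] E →ₗ[k] E) (D : O →ₗ[k] E)
    (hsymm : ∀ u v : E, P u v = P v u)
    (hPD : ∀ (u : E) (f : O), P u (D f) = ρ u f)
    (hLeib : ∀ (u v : E) (f : O), br u (f • v) = f • br u v + ρ u f • v)
    (hAnti : ∀ u v : E, br u v + br v u = D (P u v))
    (hCompat : ∀ u v w : E, ρ u (P v w) = P (br u v) w + P v (br u w))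
    (hJac : ∀ u v w : E, br u (br v w) = br (br u v) w + br v (br u w))
    (hfaith : ∀ f : O, (∀ w : E, f • w = 0) → f = 0) :
    ∀ (u v : E) (f : O), ρ (br u v) f = ρ u (ρ v f) - ρ v (ρ u f) := by
  intro u v f
  have key : ∀ w : E, (ρ (br u v) f - (ρ u (ρ v f) - ρ v (ρ u f))) • w = 0 := by
    intro w
    have h := hJac u v (f • w)
    rw [hLeib v w f, map_add, hLeib u (br v w) f, hLeib u w (ρ v f),
      hLeib (br u v) w f, hLeib u w f, map_add, hLeib v (br u w) f, hLeib v w (ρ u f),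
      hJac u v w] at h
    rw [smul_add] at h
    have h2 : (ρ u) ((ρ v) f) • w = (ρ (br u v)) f • w + (ρ v) ((ρ u) f) • w := by
      abel_nf at h
      exact add_left_cancel (add_left_cancel (add_left_cancel (add_left_cancel h)))
    rw [sub_smul, sub_smul, h2]
    abel
  exact sub_eq_zero.mp (hfaith _ key)
end

section
/- In a Courant algebroid (E, ⟨·,·⟩, ρ, [·,·], D) over O whose pairing is separating and in which E is a faithful O-module, one has ρ(D f) = 0 for all f ∈ O; that is, ρ ∘ D = 0, so the tangent sequence of the Courant algebroid is a complex and the kernel of ρ is coisotropic. (Second assertion of the paper's Lemma on the tangent complex of a Courant algebroid.) -/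
theorem courant_anchor_comp_D_eq_zero
    {k : Type*} [CommRing k] {O : Type*} [CommRing O] [Algebra k O]
    {E : Type*} [AddCommGroup E] [Module k E] [Module O E] [IsScalarTower k O E]
    (P : E →ₗ[O] E →ₗ[O] O) (ρ : E →ₗ[O] Derivation k O O)
    (br : E →ₗ[k] E →ₗ[k] E) (D : O →ₗ[k] E)
    (hsymm : ∀ u v : E, P u v = P v u)
    (hPD : ∀ (u : E) (f : O), P u (D f) = ρ u f)
    (hLeib : ∀ (u v : E) (f : O), br u (f • v) = f • br u v + ρ u f • v)
    (hAnti : ∀ u v : E, br u v + br v u = D (P u v))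
    (hCompat : ∀ u v w : E, ρ u (P v w) = P (br u v) w + P v (br u w))
    (hJac : ∀ u v w : E, br u (br v w) = br (br u v) w + br v (br u w))
    (hsep : ∀ u : E, (∀ v : E, P u v = 0) → u = 0)
    (hfaith : ∀ f : O, (∀ w : E, f • w = 0) → f = 0) :
    ∀ f : O, ρ (D f) = 0 := by
  -- Step 1: the anchor is a homomorphism onto commutators
  have hanchor : ∀ (u v : E) (f : O),
      ρ (br u v) f = ρ u (ρ v f) - ρ v (ρ u f) := by
    intro u v f
    have key : ∀ w : E,
        (ρ (br u v) f - (ρ u (ρ v f) - ρ v (ρ u f))) • w = 0 := by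
      intro w
      have h := hJac u v (f • w)
      rw [hLeib v w f, map_add, hLeib u (br v w) f, hLeib u w (ρ v f),
        hLeib (br u v) w f, hLeib u w f, map_add, hLeib v (br u w) f,
        hLeib v w (ρ u f), hJac u v w] at h
      linear_combination (norm := module) -h
    have := hfaith _ key
    linear_combination this
  -- Step 2: br u (D f) = D (ρ u f)
  have hbrD : ∀ (u : E) (f : O), br u (D f) = D (ρ u f) := by
    intro u f
    have key : ∀ w : E, P (br u (D f) - D (ρ u f)) w = 0 := by
      intro w
      have hc := hCompat u (D f) w
      rw [hsymm (D f) w, hPD w f, hsymm (D f) (br u w), hPD (br u w) f,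
        hanchor u w f] at hc
      have h2 : P (D (ρ u f)) w = ρ w (ρ u f) := by
        rw [hsymm, hPD]
      rw [map_sub, LinearMap.sub_apply, h2]
      linear_combination -hc
    have := hsep _ key
    rwa [sub_eq_zero] at this
  -- Step 3: br (D f) v = 0
  have hbrD0 : ∀ (f : O) (v : E), br (D f) v = 0 := by
    intro f v
    have h := hAnti (D f) v
    rw [hbrD v f, hsymm (D f) v, hPD v f] at h
    exact add_right_cancel (by rw [zero_add]; exact h)
  -- Step 4: conclude
  intro f
  ext g
  have key : ∀ w : E, (ρ (D f) g) • w = 0 := by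
    intro w
    have h := hLeib (D f) w g
    rw [hbrD0 f (g • w), hbrD0 f w, smul_zero, zero_add] at h
    exact h.symm
  have := hfaith _ key
  simpa using this
end

section
/- Let (E, ⟨·,·⟩, ρ, [·,·], D) be an almost Courant algebroid over O. Then the curvature is O-linear in its second argument: R(u, f•v) = f•R(u,v) for all u, v ∈ E and f ∈ O. If moreover ρ(D f) = 0 for all f ∈ O (coisotropy of the kernel of the anchor), then R is antisymmetric, R(u,v) = −R(v,u), and consequently also O-linear in its first argument: R(f•u, v) = f•R(u,v). (Part (1) of the paper's Lemma on almost Courant algebroids.) -/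
/-- The curvature `R(u,v) g = ρ([u,v]) g - (ρ(u)(ρ(v) g) - ρ(v)(ρ(u) g))` of an
almost Courant algebroid, evaluated pointwise on `O`. -/
def curv {k : Type*} [CommRing k] {O : Type*} [CommRing O] [Algebra k O]
    {E : Type*} [AddCommGroup E] [Module k E] [Module O E] [IsScalarTower k O E]
    (ρ : E →ₗ[O] Derivation k O O) (br : E →ₗ[k] E →ₗ[k] E) (u v : E) (g : O) : O :=
  ρ (br u v) g - (ρ u (ρ v g) - ρ v (ρ u g))

theorem almostCourant_curv_linear_and_antisymm
    {k : Type*} [CommRing k] {O : Type*} [CommRing O] [Algebra k O]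
    {E : Type*} [AddCommGroup E] [Module k E] [Module O E] [IsScalarTower k O E]
    (P : E →ₗ[O] E →ₗ[O] O) (ρ : E →ₗ[O] Derivation k O O)
    (br : E →ₗ[k] E →ₗ[k] E) (D : O →ₗ[k] E)
    (hsymm : ∀ u v : E, P u v = P v u)
    (hPD : ∀ (u : E) (f : O), P u (D f) = ρ u f)
    (hLeib : ∀ (u v : E) (f : O), br u (f • v) = f • br u v + ρ u f • v)
    (hAnti : ∀ u v : E, br u v + br v u = D (P u v))
    (hCompat : ∀ u v w : E, ρ u (P v w) = P (br u v) w + P v (br u w)) :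
    (∀ (u v : E) (f g : O), curv ρ br u (f • v) g = f * curv ρ br u v g) ∧
      ((∀ f : O, ρ (D f) = 0) →
        (∀ (u v : E) (g : O), curv ρ br u v g = - curv ρ br v u g) ∧
        (∀ (u v : E) (f g : O), curv ρ br (f • u) v g = f * curv ρ br u v g)) := by
  have hmain : ∀ (u v : E) (f g : O), curv ρ br u (f • v) g = f * curv ρ br u v g := by
    intro u v f g
    simp only [curv, hLeib, map_add, map_smul, Derivation.add_apply,
      Derivation.smul_apply, smul_eq_mul, Derivation.leibniz]
    ring
  refine ⟨hmain, fun h0 => ?_⟩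
  have hanti : ∀ (u v : E) (g : O), curv ρ br u v g = - curv ρ br v u g := by
    intro u v g
    have : curv ρ br u v g + curv ρ br v u g = 0 := by
      have h1 : ρ (br u v) g + ρ (br v u) g = 0 := by
        have := congrArg (fun x => ρ x g) (hAnti u v)
        simpa [h0 (P u v)] using this
      simp only [curv]
      linear_combination h1
    linear_combination this
  refine ⟨hanti, fun u v f g => ?_⟩
  rw [hanti (f • u) v g, hmain v u f g, hanti u v g]
  ring
end

section
/- Let (E, ⟨·,·⟩, ρ, [·,·], D) be an almost Courant algebroid over O with separating pairing, and suppose the curvature vanishes: R(u,v) = 0 for all u, v ∈ E. Then [u, D f] = D(ρ(u) f) for all u ∈ E and f ∈ O. (Part (2) of the paper's Lemma on almost Courant algebroids.) -/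
theorem almostCourant_bracket_with_D
    {k : Type*} [CommRing k] {O : Type*} [CommRing O] [Algebra k O]
    {E : Type*} [AddCommGroup E] [Module k E] [Module O E] [IsScalarTower k O E]
    (P : E →ₗ[O] E →ₗ[O] O) (ρ : E →ₗ[O] Derivation k O O)
    (br : E →ₗ[k] E →ₗ[k] E) (D : O →ₗ[k] E)
    (hsymm : ∀ u v : E, P u v = P v u)
    (hPD : ∀ (u : E) (f : O), P u (D f) = ρ u f)
    (hLeib : ∀ (u v : E) (f : O), br u (f • v) = f • br u v + ρ u f • v)
    (hAnti : ∀ u v : E, br u v + br v u = D (P u v))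
    (hCompat : ∀ u v w : E, ρ u (P v w) = P (br u v) w + P v (br u w))
    (hsep : ∀ u : E, (∀ v : E, P u v = 0) → u = 0)
    (hR : ∀ (u v : E) (g : O), curv ρ br u v g = 0) :
    ∀ (u : E) (f : O), br u (D f) = D (ρ u f) := by
  intro u f
  have key : ∀ v : E, P (br u (D f) - D (ρ u f)) v = 0 := by
    intro v
    have hc := hCompat u v (D f)
    have hR' := hR u v f
    simp only [curv] at hR'
    have h1 : P v (br u (D f)) = ρ v (ρ u f) := by
      have hPD1 : P v (D f) = ρ v f := hPD v f
      have hPD2 : P (br u v) (D f) = ρ (br u v) f := hPD (br u v) f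
      rw [hPD1, hPD2] at hc
      linear_combination -hc - hR'
    have h2 : P v (D (ρ u f)) = ρ v (ρ u f) := hPD v (ρ u f)
    rw [map_sub, LinearMap.sub_apply, hsymm (br u (D f)) v, hsymm (D (ρ u f)) v,
      h1, h2, sub_self]
  have := hsep _ key
  exact sub_eq_zero.mp this
end

section
/- Let (E, ⟨·,·⟩, ρ, [·,·], D) be an almost Courant algebroid over O with separating pairing, and suppose the curvature vanishes: R(u,v) = 0 for all u, v ∈ E. Then the Jacobiator is O-linear in its third argument and alternating: for all u, v, w ∈ E and f ∈ O, Jac(u,v,f•w) = f•Jac(u,v,w), Jac(u,v,w) = −Jac(v,u,w), and Jac(u,v,w) = −Jac(u,w,v); in particular Jac is O-trilinear. (Part (4) of the paper's Lemma on almost Courant algebroids.) -/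
/-- The Jacobiator `Jac(u,v,w) = [u,[v,w]] - [v,[u,w]] - [[u,v],w]` of a bracket. -/
def jacb {k : Type*} [CommRing k] {E : Type*} [AddCommGroup E] [Module k E]
    (br : E →ₗ[k] E →ₗ[k] E) (u v w : E) : E :=
  br u (br v w) - br v (br u w) - br (br u v) w

theorem almostCourant_jacobiator_trilinear_alternating
    {k : Type*} [CommRing k] {O : Type*} [CommRing O] [Algebra k O]
    {E : Type*} [AddCommGroup E] [Module k E] [Module O E] [IsScalarTower k O E]
    (P : E →ₗ[O] E →ₗ[O] O) (ρ : E →ₗ[O] Derivation k O O)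
    (br : E →ₗ[k] E →ₗ[k] E) (D : O →ₗ[k] E)
    (hsymm : ∀ u v : E, P u v = P v u)
    (hPD : ∀ (u : E) (f : O), P u (D f) = ρ u f)
    (hLeib : ∀ (u v : E) (f : O), br u (f • v) = f • br u v + ρ u f • v)
    (hAnti : ∀ u v : E, br u v + br v u = D (P u v))
    (hCompat : ∀ u v w : E, ρ u (P v w) = P (br u v) w + P v (br u w))
    (hsep : ∀ u : E, (∀ v : E, P u v = 0) → u = 0)
    (hR : ∀ (u v : E) (g : O), curv ρ br u v g = 0) :
    (∀ (u v w : E) (f : O), jacb br u v (f • w) = f • jacb br u v w) ∧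
      (∀ u v w : E, jacb br u v w = - jacb br v u w) ∧
      (∀ u v w : E, jacb br u v w = - jacb br u w v) := by
  have hRρ : ∀ (u v : E) (g : O), ρ (br u v) g = ρ u (ρ v g) - ρ v (ρ u g) := by
    intro u v g
    have h := hR u v g
    unfold curv at h
    linear_combination h
  have bDf : ∀ (u : E) (f : O), br u (D f) = D (ρ u f) := by
    intro u f
    have h : ∀ v : E, P (br u (D f) - D (ρ u f)) v = 0 := by
      intro v
      rw [map_sub, LinearMap.sub_apply]
      have h1 : P (br u (D f)) v = ρ v (ρ u f) := by
        rw [hsymm]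
        have hc := hCompat u v (D f)
        rw [hPD, hPD] at hc
        have h2 := hRρ u v f
        linear_combination -hc - h2
      have h3 : P (D (ρ u f)) v = ρ v (ρ u f) := by rw [hsymm, hPD]
      rw [h1, h3, sub_self]
    have := hsep _ h
    rwa [sub_eq_zero] at this
  have bDf2 : ∀ (f : O) (u : E), br (D f) u = 0 := by
    intro f u
    have h := hAnti (D f) u
    rw [bDf u f, hsymm, hPD] at h
    exact add_eq_right.mp h
  refine ⟨?_, ?_, ?_⟩
  · intro u v w f
    simp only [jacb, hLeib, map_add, hRρ]
    module
  · intro u v w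
    have h2 : br (br u v) w + br (br v u) w = 0 := by
      rw [← LinearMap.add_apply, ← map_add, hAnti, bDf2]
    have h3 : br (br u v) w = - br (br v u) w := eq_neg_of_add_eq_zero_left h2
    simp only [jacb]
    rw [h3]
    abel
  · intro u v w
    have e1 : br u (br v w) + br u (br w v) = D (ρ u (P v w)) := by
      rw [← map_add, hAnti, bDf]
    have e2 : br v (br u w) + br (br u w) v = D (P v (br u w)) := hAnti _ _
    have e3 : br (br u v) w + br w (br u v) = D (P (br u v) w) := hAnti _ _
    have e4 := hCompat u v w
    have key : jacb br u v w + jacb br u w v = 0 := by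
      have hre : jacb br u v w + jacb br u w v =
          (br u (br v w) + br u (br w v)) - (br v (br u w) + br (br u w) v)
            - (br (br u v) w + br w (br u v)) := by
        simp only [jacb]; abel
      rw [hre, e1, e2, e3, ← map_sub, ← map_sub, e4,
        show P (br u v) w + P v (br u w) - P v (br u w) - P (br u v) w = 0 by ring, map_zero]
    linear_combination (norm := abel) key
end

section
/- Let (E, ⟨·,·⟩, ρ, [·,·], D) be an almost Courant algebroid over O with separating pairing such that ρ(D f) = 0 for all f ∈ O. Let S ⊆ E be a subset whose O-linear span is all of E, and suppose R(s,t) = 0 and Jac(s,t,r) = 0 for all s, t, r ∈ S. Then R(u,v) = 0 and Jac(u,v,w) = 0 for all u, v, w ∈ E; in particular the Jacobi identity [u,[v,w]] = [[u,v],w] + [v,[u,w]] holds on all of E, so E is a Courant algebroid. (The paper's Corollary characterizing Courant algebroids among almost Courant algebroids via a local basis of sections.) -/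
theorem almostCourant_is_courant_of_vanishing_on_spanning_set
    {k : Type*} [CommRing k] {O : Type*} [CommRing O] [Algebra k O]
    {E : Type*} [AddCommGroup E] [Module k E] [Module O E] [IsScalarTower k O E]
    (P : E →ₗ[O] E →ₗ[O] O) (ρ : E →ₗ[O] Derivation k O O)
    (br : E →ₗ[k] E →ₗ[k] E) (D : O →ₗ[k] E)
    (hsymm : ∀ u v : E, P u v = P v u)
    (hPD : ∀ (u : E) (f : O), P u (D f) = ρ u f)
    (hLeib : ∀ (u v : E) (f : O), br u (f • v) = f • br u v + ρ u f • v)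
    (hAnti : ∀ u v : E, br u v + br v u = D (P u v))
    (hCompat : ∀ u v w : E, ρ u (P v w) = P (br u v) w + P v (br u w))
    (hsep : ∀ u : E, (∀ v : E, P u v = 0) → u = 0)
    (hcoiso : ∀ f : O, ρ (D f) = 0)
    (S : Set E) (hspan : Submodule.span O S = ⊤)
    (hRS : ∀ s ∈ S, ∀ t ∈ S, ∀ g : O, curv ρ br s t g = 0)
    (hJacS : ∀ s ∈ S, ∀ t ∈ S, ∀ r ∈ S, jacb br s t r = 0) :
    (∀ (u v : E) (g : O), curv ρ br u v g = 0) ∧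
      (∀ u v w : E, jacb br u v w = 0) ∧
      (∀ u v w : E, br u (br v w) = br (br u v) w + br v (br u w)) := by
  -- ρ is anti-symmetric on brackets
  have hρanti : ∀ u v : E, ρ (br v u) = - ρ (br u v) := by
    intro u v
    have h : ρ (br u v) + ρ (br v u) = 0 := by rw [← map_add, hAnti, hcoiso]
    exact eq_neg_of_add_eq_zero_right h
  -- curvature is O-linear in the second slot
  have hcsr : ∀ (u v : E) (f g : O), curv ρ br u (f • v) g = f * curv ρ br u v g := by
    intro u v f g
    simp only [curv, hLeib, map_add, map_smul, Derivation.add_apply, Derivation.smul_apply,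
      smul_eq_mul, Derivation.leibniz]
    ring
  -- curvature is O-linear in the first slot
  have hcsl : ∀ (u v : E) (f g : O), curv ρ br (f • u) v g = f * curv ρ br u v g := by
    intro u v f g
    have hb : br (f • u) v = D (f • P u v) - (f • br v u + ρ v f • u) := by
      rw [eq_sub_iff_add_eq, ← hLeib v u f, hAnti (f • u) v, map_smul, LinearMap.smul_apply]
    simp only [curv, hb, map_sub, map_add, map_smul, hcoiso, hρanti u v,
      Derivation.sub_apply, Derivation.add_apply, Derivation.zero_apply,
      Derivation.smul_apply, Derivation.neg_apply, smul_eq_mul, Derivation.leibniz,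
      smul_neg]
    ring
  have hcaddl : ∀ (u u' v : E) (g : O),
      curv ρ br (u + u') v g = curv ρ br u v g + curv ρ br u' v g := by
    intro u u' v g
    simp only [curv, map_add, LinearMap.add_apply, Derivation.add_apply, Derivation.map_add]
    ring
  have hcaddr : ∀ (u v v' : E) (g : O),
      curv ρ br u (v + v') g = curv ρ br u v g + curv ρ br u v' g := by
    intro u v v' g
    simp only [curv, map_add, LinearMap.add_apply, Derivation.add_apply, Derivation.map_add]
    ring
  -- curvature vanishes everywhere
  have hcurv : ∀ (u v : E) (g : O), curv ρ br u v g = 0 := by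
    have hSall : ∀ s ∈ S, ∀ (v : E) (g : O), curv ρ br s v g = 0 := by
      intro s hs v g
      have hv : v ∈ Submodule.span O S := hspan ▸ Submodule.mem_top
      induction hv using Submodule.span_induction with
      | mem x hx => exact hRS s hs x hx g
      | zero => simp [curv]
      | add x y hx hy ihx ihy => rw [hcaddr, ihx, ihy, add_zero]
      | smul a x hx ih => rw [hcsr, ih, mul_zero]
    intro u v g
    have hu : u ∈ Submodule.span O S := hspan ▸ Submodule.mem_top
    induction hu using Submodule.span_induction with
    | mem x hx => exact hSall x hx v g
    | zero => simp [curv]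
    | add x y hx hy ihx ihy => rw [hcaddl, ihx, ihy, add_zero]
    | smul a x hx ih => rw [hcsl, ih, mul_zero]
  -- bracket with D on the right
  have hbrD : ∀ (u : E) (f : O), br u (D f) = D (ρ u f) := by
    intro u f
    have key : ∀ v : E, P v (br u (D f)) = P v (D (ρ u f)) := by
      intro v
      have h1 := hCompat u v (D f)
      rw [hPD, hPD] at h1
      have hc := hcurv u v f
      simp only [curv] at hc
      rw [hPD]
      linear_combination -h1 - hc
    have h0 : br u (D f) - D (ρ u f) = 0 := by
      apply hsep
      intro v
      rw [hsymm _ v, map_sub, key v, sub_self]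
    exact sub_eq_zero.mp h0
  -- bracket with D on the left kills everything
  have hDbr : ∀ (f : O) (w : E), br (D f) w = 0 := by
    intro f w
    have h : br (D f) w + br w (D f) = D (ρ w f) := by
      rw [hAnti, hsymm, hPD]
    rw [hbrD w f] at h
    exact add_eq_right.mp h
  -- Jacobiator swap symmetries
  have hsw12 : ∀ u v w : E, jacb br u v w + jacb br v u w = 0 := by
    intro u v w
    have h : jacb br u v w + jacb br v u w = - br (D (P u v)) w := by
      rw [← hAnti]
      simp only [jacb, map_add, LinearMap.add_apply]
      abel
    rw [h, hDbr, neg_zero]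
  have hsw23 : ∀ u v w : E, jacb br u v w + jacb br u w v = 0 := by
    intro u v w
    have e1 : br u (br v w) + br u (br w v) = D (ρ u (P v w)) := by
      rw [← map_add, hAnti, hbrD]
    have e2 := hAnti v (br u w)
    have e3 := hAnti w (br u v)
    have e4 : ρ u (P v w) = P v (br u w) + P w (br u v) := by
      rw [hCompat u v w, hsymm (br u v) w, add_comm]
    have key : jacb br u v w + jacb br u w v
        = D (ρ u (P v w)) - D (P v (br u w)) - D (P w (br u v)) := by
      rw [← e1, ← e2, ← e3]
      simp only [jacb]
      abel
    rw [key, e4, map_add]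
    abel
  -- Jacobiator O-linear in the third slot
  have hjs3 : ∀ (u v w : E) (f : O), jacb br u v (f • w) = f • jacb br u v w := by
    intro u v w f
    have hc := hcurv u v f
    simp only [curv] at hc
    have hre : ρ (br u v) f = ρ u (ρ v f) - ρ v (ρ u f) := by linear_combination hc
    simp only [jacb, hLeib, map_add]
    rw [hre]
    module
  -- cyclic symmetry
  have hcyc : ∀ u v w : E, jacb br v w u = jacb br u v w := by
    intro u v w
    have a1 : jacb br v w u = - jacb br v u w := eq_neg_of_add_eq_zero_left (hsw23 v w u)
    have a2 : jacb br v u w = - jacb br u v w := eq_neg_of_add_eq_zero_left (hsw12 v u w)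
    rw [a1, a2, neg_neg]
  have hjs1 : ∀ (u v w : E) (f : O), jacb br (f • u) v w = f • jacb br u v w := by
    intro u v w f
    rw [← hcyc (f • u) v w, hjs3, hcyc]
  have hjs2 : ∀ (u v w : E) (f : O), jacb br u (f • v) w = f • jacb br u v w := by
    intro u v w f
    have b1 : jacb br u (f • v) w = - jacb br (f • v) u w :=
      eq_neg_of_add_eq_zero_left (hsw12 u (f • v) w)
    have b2 : jacb br v u w = - jacb br u v w := eq_neg_of_add_eq_zero_left (hsw12 v u w)
    rw [b1, hjs1, b2, smul_neg, neg_neg]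
  -- additivity in each slot
  have hja1 : ∀ u u' v w : E, jacb br (u + u') v w = jacb br u v w + jacb br u' v w := by
    intro u u' v w
    simp only [jacb, map_add, LinearMap.add_apply]
    abel
  have hja2 : ∀ u v v' w : E, jacb br u (v + v') w = jacb br u v w + jacb br u v' w := by
    intro u v v' w
    simp only [jacb, map_add, LinearMap.add_apply]
    abel
  have hja3 : ∀ u v w w' : E, jacb br u v (w + w') = jacb br u v w + jacb br u v w' := by
    intro u v w w'
    simp only [jacb, map_add, LinearMap.add_apply]
    abel
  -- Jacobiator vanishes everywhere
  have hjac : ∀ u v w : E, jacb br u v w = 0 := by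
    have step1 : ∀ s ∈ S, ∀ t ∈ S, ∀ w : E, jacb br s t w = 0 := by
      intro s hs t ht w
      have hw : w ∈ Submodule.span O S := hspan ▸ Submodule.mem_top
      induction hw using Submodule.span_induction with
      | mem x hx => exact hJacS s hs t ht x hx
      | zero => simp [jacb]
      | add x y hx hy ihx ihy => rw [hja3, ihx, ihy, add_zero]
      | smul a x hx ih => rw [hjs3, ih, smul_zero]
    have step2 : ∀ s ∈ S, ∀ v w : E, jacb br s v w = 0 := by
      intro s hs v w
      have hv : v ∈ Submodule.span O S := hspan ▸ Submodule.mem_top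
      induction hv using Submodule.span_induction generalizing w with
      | mem x hx => exact step1 s hs x hx w
      | zero => simp [jacb]
      | add x y hx hy ihx ihy => rw [hja2, ihx, ihy, add_zero]
      | smul a x hx ih => rw [hjs2, ih, smul_zero]
    intro u v w
    have hu : u ∈ Submodule.span O S := hspan ▸ Submodule.mem_top
    induction hu using Submodule.span_induction generalizing v w with
    | mem x hx => exact step2 x hx v w
    | zero => simp [jacb]
    | add x y hx hy ihx ihy => rw [hja1, ihx, ihy, add_zero]
    | smul a x hx ih => rw [hjs1, ih, smul_zero]
  refine ⟨hcurv, hjac, fun u v w => ?_⟩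
  have h := hjac u v w
  simp only [jacb, sub_sub] at h
  have h2 := sub_eq_zero.mp h
  rw [h2, add_comm]
end

section
/- Let (E, ⟨·,·⟩, ρ, [·,·], D) be a Courant algebroid over O and let L ⊆ E be an isotropic involutive submodule. If u, v ∈ L^⊥ are L-flat (i.e. [l,u] ∈ L and [l,v] ∈ L for all l ∈ L), then [u,v] ∈ L^⊥ and [u,v] is again L-flat: [l, [u,v]] ∈ L for all l ∈ L. Hence the L-flat elements of L^⊥ are closed under the bracket modulo L. (Key step in the proof of the paper's Theorem on reduction of O-Courant algebroids.) -/
theorem courant_flat_sections_closed_under_bracket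
    {k : Type*} [CommRing k] {O : Type*} [CommRing O] [Algebra k O]
    {E : Type*} [AddCommGroup E] [Module k E] [Module O E] [IsScalarTower k O E]
    (P : E →ₗ[O] E →ₗ[O] O) (ρ : E →ₗ[O] Derivation k O O)
    (br : E →ₗ[k] E →ₗ[k] E) (D : O →ₗ[k] E)
    (hsymm : ∀ u v : E, P u v = P v u)
    (hPD : ∀ (u : E) (f : O), P u (D f) = ρ u f)
    (hLeib : ∀ (u v : E) (f : O), br u (f • v) = f • br u v + ρ u f • v)
    (hAnti : ∀ u v : E, br u v + br v u = D (P u v))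
    (hCompat : ∀ u v w : E, ρ u (P v w) = P (br u v) w + P v (br u w))
    (hJac : ∀ u v w : E, br u (br v w) = br (br u v) w + br v (br u w))
    (L : Submodule O E)
    (hiso : ∀ l ∈ L, ∀ l' ∈ L, P l l' = 0)
    (hinv : ∀ l ∈ L, ∀ l' ∈ L, br l l' ∈ L)
    (u v : E)
    (hu : ∀ m ∈ L, P u m = 0) (hv : ∀ m ∈ L, P v m = 0)
    (huf : ∀ l ∈ L, br l u ∈ L) (hvf : ∀ l ∈ L, br l v ∈ L) :
    (∀ m ∈ L, P (br u v) m = 0) ∧ (∀ l ∈ L, br l (br u v) ∈ L) := by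
  have hum : ∀ m ∈ L, br u m ∈ L := fun m hm => by
    have h : br u m = D (P u m) - br m u := eq_sub_of_add_eq (hAnti u m)
    rw [h, hu m hm, map_zero, zero_sub]
    exact L.neg_mem (huf m hm)
  constructor
  · intro m hm
    have h := hCompat u v m
    rw [hv m hm, map_zero] at h
    have h2 : P v (br u m) = 0 := by
      have h3 : br u m = D (P u m) - br m u := eq_sub_of_add_eq (hAnti u m)
      rw [h3, hu m hm, map_zero, zero_sub, map_neg, hv _ (huf m hm), neg_zero]
    rw [h2, add_zero] at h
    exact h.symm
  · intro l hl
    rw [hJac l u v]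
    exact L.add_mem (hvf _ (huf l hl)) (hum _ (hvf l hl))
end

section
/- Let (E, ⟨·,·⟩, ρ, [·,·], D) be a Courant algebroid over O with E a faithful O-module, and let L ⊆ E be a submodule. If u ∈ E is L-flat (i.e. [l,u] ∈ L for all l ∈ L) and f ∈ O satisfies ρ(l) f = 0 for all l ∈ L, then ρ(l)(ρ(u) f) = 0 for all l ∈ L; that is, the anchor of an L-flat element preserves the invariant subalgebra O^L := {f ∈ O : ρ(l) f = 0 for all l ∈ L}. (Step in the proof of the paper's Theorem on reduction of O-Courant algebroids: the reduced anchor is well-defined on O^L.) -/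
theorem courant_anchor_of_flat_preserves_invariants
    {k : Type*} [CommRing k] {O : Type*} [CommRing O] [Algebra k O]
    {E : Type*} [AddCommGroup E] [Module k E] [Module O E] [IsScalarTower k O E]
    (P : E →ₗ[O] E →ₗ[O] O) (ρ : E →ₗ[O] Derivation k O O)
    (br : E →ₗ[k] E →ₗ[k] E) (D : O →ₗ[k] E)
    (hsymm : ∀ u v : E, P u v = P v u)
    (hPD : ∀ (u : E) (f : O), P u (D f) = ρ u f)
    (hLeib : ∀ (u v : E) (f : O), br u (f • v) = f • br u v + ρ u f • v)
    (hAnti : ∀ u v : E, br u v + br v u = D (P u v))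
    (hCompat : ∀ u v w : E, ρ u (P v w) = P (br u v) w + P v (br u w))
    (hJac : ∀ u v w : E, br u (br v w) = br (br u v) w + br v (br u w))
    (hfaith : ∀ f : O, (∀ w : E, f • w = 0) → f = 0)
    (L : Submodule O E) (u : E) (huf : ∀ l ∈ L, br l u ∈ L)
    (f : O) (hf : ∀ l ∈ L, ρ l f = 0) :
    ∀ l ∈ L, ρ l (ρ u f) = 0 := by
  have key : ∀ (a b : E) (g : O),
      ρ (br a b) g = ρ a (ρ b g) - ρ b (ρ a g) := by
    intro a b g
    have h0 : (ρ (br a b) g - (ρ a (ρ b g) - ρ b (ρ a g))) = 0 := by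
      apply hfaith
      intro w
      have h1 := hJac a b (g • w)
      have h2 := hJac a b w
      simp only [hLeib, map_add] at h1
      rw [h2] at h1
      rw [sub_smul, sub_smul]
      simp only [smul_add] at h1
      linear_combination (norm := abel) -h1
    have := sub_eq_zero.mp h0
    linear_combination this
  intro l hl
  have h1 := key l u f
  have h2 : ρ (br l u) f = 0 := hf _ (huf l hl)
  have h3 : ρ l f = 0 := hf l hl
  rw [h2, h3, map_zero] at h1
  linear_combination -h1
end

section
/- Uniqueness in extension of scalars for Courant algebroids: let (E, ⟨·,·⟩, ρ, [·,·], D) be a Courant algebroid over O, let i : O → O' be a k-algebra homomorphism, and form E' := O' ⊗_O E with the base-changed pairing ⟨·,·⟩'. Let ρ' : E' → Der_k(O') and D' : O' → E' be arbitrary maps. Suppose B₁, B₂ : E' × E' → E' are k-bilinear brackets each satisfying, for all x, y ∈ E' and c ∈ O', the Leibniz rule B(x, c•y) = c•B(x,y) + (ρ'(x) c)•y and the failed antisymmetry B(x,y) + B(y,x) = D'⟨x,y⟩', and suppose B₁(1⊗u, 1⊗v) = B₂(1⊗u, 1⊗v) for all u, v ∈ E. Then B₁ = B₂. (Uniqueness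 assertion of the paper's Theorem on extension of scalars for Courant algebroids.) -/
open scoped TensorProduct in
theorem courant_extension_of_scalars_uniqueness
    {k : Type*} [CommRing k] {O : Type*} [CommRing O] [Algebra k O]
    {E : Type*} [AddCommGroup E] [Module k E] [Module O E] [IsScalarTower k O E]
    (P : E →ₗ[O] E →ₗ[O] O) (ρ : E →ₗ[O] Derivation k O O)
    (br : E →ₗ[k] E →ₗ[k] E) (D : O →ₗ[k] E)
    (hsymm : ∀ u v : E, P u v = P v u)
    (hPD : ∀ (u : E) (f : O), P u (D f) = ρ u f)
    (hLeib : ∀ (u v : E) (f : O), br u (f • v) = f • br u v + ρ u f • v)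
    (hAnti : ∀ u v : E, br u v + br v u = D (P u v))
    (hCompat : ∀ u v w : E, ρ u (P v w) = P (br u v) w + P v (br u w))
    (hJac : ∀ u v w : E, br u (br v w) = br (br u v) w + br v (br u w))
    {O' : Type*} [CommRing O'] [Algebra k O'] [Algebra O O'] [IsScalarTower k O O']
    (P' : (O' ⊗[O] E) →ₗ[O'] (O' ⊗[O] E) →ₗ[O'] O')
    (hP' : ∀ (a b : O') (u v : E),
      P' (a ⊗ₜ[O] u) (b ⊗ₜ[O] v) = a * b * algebraMap O O' (P u v))
    (ρ' : (O' ⊗[O] E) → Derivation k O' O') (D' : O' → O' ⊗[O] E)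
    (B₁ B₂ : (O' ⊗[O] E) →ₗ[k] (O' ⊗[O] E) →ₗ[k] (O' ⊗[O] E))
    (hLeib₁ : ∀ (x y : O' ⊗[O] E) (c : O'), B₁ x (c • y) = c • B₁ x y + ρ' x c • y)
    (hLeib₂ : ∀ (x y : O' ⊗[O] E) (c : O'), B₂ x (c • y) = c • B₂ x y + ρ' x c • y)
    (hAnti₁ : ∀ x y : O' ⊗[O] E, B₁ x y + B₁ y x = D' (P' x y))
    (hAnti₂ : ∀ x y : O' ⊗[O] E, B₂ x y + B₂ y x = D' (P' x y))
    (hagree : ∀ u v : E,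
      B₁ ((1 : O') ⊗ₜ[O] u) ((1 : O') ⊗ₜ[O] v) = B₂ ((1 : O') ⊗ₜ[O] u) ((1 : O') ⊗ₜ[O] v)) :
    B₁ = B₂ := by
  have h1 : ∀ (u : E) (y : O' ⊗[O] E),
      B₁ ((1 : O') ⊗ₜ[O] u) y = B₂ ((1 : O') ⊗ₜ[O] u) y := by
    intro u y
    induction y using TensorProduct.induction_on with
    | zero => simp
    | tmul c v =>
        have hc : c ⊗ₜ[O] v = c • ((1 : O') ⊗ₜ[O] v) := by
          rw [TensorProduct.smul_tmul', smul_eq_mul, mul_one]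
        rw [hc, hLeib₁, hLeib₂, hagree]
    | add a b ha hb => rw [map_add, map_add, ha, hb]
  have h2 : ∀ (x : O' ⊗[O] E) (u : E),
      B₁ x ((1 : O') ⊗ₜ[O] u) = B₂ x ((1 : O') ⊗ₜ[O] u) := by
    intro x u
    have e1 := hAnti₁ x ((1 : O') ⊗ₜ[O] u)
    have e2 := hAnti₂ x ((1 : O') ⊗ₜ[O] u)
    have e3 : B₁ ((1 : O') ⊗ₜ[O] u) x = B₂ ((1 : O') ⊗ₜ[O] u) x := h1 u x
    have e4 := e1.trans e2.symm
    rw [e3] at e4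
    exact add_right_cancel e4
  ext x y
  induction y using TensorProduct.induction_on with
  | zero => simp
  | tmul c v =>
      have hc : c ⊗ₜ[O] v = c • ((1 : O') ⊗ₜ[O] v) := by
        rw [TensorProduct.smul_tmul', smul_eq_mul, mul_one]
      rw [hc, hLeib₁, hLeib₂, h2]
  | add a b ha hb => rw [map_add, map_add, ha, hb]
end

section
/- Existence in extension of scalars for Courant algebroids: let (E, ⟨·,·⟩, ρ, [·,·], D) be a Courant algebroid over O, let i : O → O' be a k-algebra homomorphism, and form E' := O' ⊗_O E with the base-changed pairing ⟨·,·⟩', assumed separating. Let ρ̂ : E → Der_k(O') be a k-linear map satisfying (i) ρ̂(f•u) = i(f)•ρ̂(u), (ii) ρ̂([u,v]) = ρ̂(u)∘ρ̂(v) − ρ̂(v)∘ρ̂(u), and (iii) ρ̂(u)(i(f)) = i(ρ(u) f), for all u, v ∈ E and f ∈ O. Let ρ' : E' → Der_k(O') be the O'-linear extension determined by ρ'(a⊗u) = a•ρ̂(u), and let D' : O' → E' be a k-linear map with ⟨x, D' c⟩' = ρ'(x) c for all x ∈ E', c ∈ O', such that ρ'(D' c) = 0 for all c ∈ O'. Then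 there exists a k-bilinear bracket [·,·]' on E' satisfying [a⊗u, b⊗v]' = (ab)⊗[u,v] + (a·ρ̂(u)(b))•(1⊗v) − (b·ρ̂(v)(a))•(1⊗u) + (b·i(⟨u,v⟩))•(D' a) for all a, b ∈ O' and u, v ∈ E, and with this bracket (E', ⟨·,·⟩', ρ', [·,·]', D') is a Courant algebroid over O'; in particular [1⊗u, 1⊗v]' = 1⊗[u,v], so the structure restricts to the original Courant algebroid on E. (Existence assertion of the paper's Theorem on extension of scalars for Courant algebroids.) -/
/-!
The bracket is prescribed on pure tensors, and the formula is `O`-balanced in both pairs `(a, u)`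
and `(b, v)`: this uses the Leibniz rules of `E`, the compatibilities of `ρhat` with `ρ`, and the
fact that `D'` is a derivation extending `1 ⊗ D`, which separation of the pairing forces. Leibniz,
failed antisymmetry, pairing compatibility and `ρ' [x, y] = [ρ' x, ρ' y]` are then checked on
pure tensors. Separation also gives `[x, D' c] = D' (ρ' x c)` and `[D' c, x] = 0`, which make the
Jacobiator `O'`-linear in each argument; it therefore vanishes, since on generators `1 ⊗ u` the
bracket is the one of `E`.
-/

open scoped TensorProduct

namespace TensorProduct

section Balanced

variable {R k M N Q : Type*} [CommRing R] [CommRing k] [AddCommGroup M] [Module R M] [Module k M]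
  [SMulCommClass R k M] [AddCommGroup N] [Module R N] [AddCommGroup Q] [Module k Q]

theorem linearMap_ext_tmul {g h : M ⊗[R] N →ₗ[k] Q} (H : ∀ m n, g (m ⊗ₜ n) = h (m ⊗ₜ n)) :
    g = h :=
  LinearMap.ext fun x => x.induction_on (by simp only [map_zero]) H fun x y hx hy => by
    rw [map_add, map_add, hx, hy]

def liftBalanced (g : M → N → Q) (add_left : ∀ m m' n, g (m + m') n = g m n + g m' n)
    (add_right : ∀ m n n', g m (n + n') = g m n + g m n')
    (smul_left : ∀ (c : k) m n, g (c • m) n = c • g m n)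
    (balanced : ∀ (r : R) m n, g (r • m) n = g m (r • n)) : M ⊗[R] N →ₗ[k] Q :=
  let f : M ⊗[R] N →+ Q := liftAddHom (.mk' (fun m => .mk' (g m) (add_right m))
    fun m m' => AddMonoidHom.ext fun n => add_left m m' n) balanced
  { f with
    map_smul' := fun c x => by
      change f (c • x) = c • f x
      induction x using TensorProduct.induction_on with
      | zero => rw [smul_zero, map_zero, smul_zero]
      | tmul m n => rw [smul_tmul']; exact smul_left c m n
      | add x y hx hy => rw [smul_add, map_add, map_add, hx, hy, smul_add] }

@[simp]
theorem liftBalanced_tmul (g : M → N → Q) (add_left : ∀ m m' n, g (m + m') n = g m n + g m' n)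
    (add_right : ∀ m n n', g m (n + n') = g m n + g m n')
    (smul_left : ∀ (c : k) m n, g (c • m) n = c • g m n)
    (balanced : ∀ (r : R) m n, g (r • m) n = g m (r • n)) (m : M) (n : N) :
    liftBalanced g add_left add_right smul_left balanced (m ⊗ₜ n) = g m n :=
  rfl

theorem eq_of_forall_tmul_eq {W : Type*} [AddCommGroup W] [Module k W]
    (B : W →ₗ[k] M ⊗[R] N →ₗ[k] Q) (hsep : ∀ x, (∀ y, B x y = 0) → x = 0) {x x' : W}
    (h : ∀ m n, B x (m ⊗ₜ n) = B x' (m ⊗ₜ n)) : x = x' := by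
  have hB : B x = B x' := linearMap_ext_tmul h
  exact sub_eq_zero.mp (hsep _ fun y => by rw [map_sub, hB, LinearMap.sub_apply, sub_self])

end Balanced

section Algebra

variable {R A M : Type*} [CommRing R] [CommRing A] [Algebra R A] [AddCommGroup M] [Module R M]

theorem tmul_smul_eq_algebraMap_smul (a : A) (f : R) (u : M) :
    a ⊗ₜ[R] (f • u) = algebraMap R A f • (a ⊗ₜ[R] u) := by
  rw [tmul_smul, algebraMap_smul]

theorem eq_zero_of_one_tmul_eq_zero {Q : Type*} [AddCommGroup Q] [Module A Q] {g : A ⊗[R] M → Q}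
    (add : ∀ x y, g (x + y) = g x + g y) (smul : ∀ (a : A) x, g (a • x) = a • g x)
    (one_tmul : ∀ m, g (1 ⊗ₜ m) = 0) (x : A ⊗[R] M) : g x = 0 := by
  induction x using TensorProduct.induction_on with
  | zero => simpa using smul 0 0
  | tmul a m => rw [tmul_eq_smul_one_tmul, smul, one_tmul, smul_zero]
  | add x y hx hy => rw [add, hx, hy, add_zero]

end Algebra

end TensorProduct

section AlmostCourant

variable {k R M : Type*} [CommRing k] [CommRing R] [Algebra k R] [AddCommGroup M] [Module k M]
  [Module R M]

structure IsAlmostCourant (P : M →ₗ[R] M →ₗ[R] R) (ρ : M →ₗ[R] Derivation k R R)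
    (br : M →ₗ[k] M →ₗ[k] M) (D : R →ₗ[k] M) : Prop where
  pairing_symm : ∀ u v, P u v = P v u
  pairing_D : ∀ u f, P u (D f) = ρ u f
  bracket_smul_right : ∀ u v (f : R), br u (f • v) = f • br u v + ρ u f • v
  bracket_add_bracket_swap : ∀ u v, br u v + br v u = D (P u v)
  anchor_pairing : ∀ u v w, ρ u (P v w) = P (br u v) w + P v (br u w)

variable {P : M →ₗ[R] M →ₗ[R] R} {ρ : M →ₗ[R] Derivation k R R} {br : M →ₗ[k] M →ₗ[k] M}
  {D : R →ₗ[k] M}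

theorem map_mul_of_separating (hsymm : ∀ u v, P u v = P v u)
    (hsep : ∀ u, (∀ v, P u v = 0) → u = 0) (hPD : ∀ u f, P u (D f) = ρ u f) (f g : R) :
    D (f * g) = f • D g + g • D f := by
  refine sub_eq_zero.mp (hsep _ fun v => ?_)
  rw [hsymm, map_sub, map_add, map_smul, map_smul, hPD, hPD, hPD, Derivation.leibniz]
  simp only [smul_eq_mul]
  ring

namespace IsAlmostCourant

theorem bracket_swap (h : IsAlmostCourant P ρ br D) (u v : M) : br v u = D (P u v) - br u v := by
  rw [← h.bracket_add_bracket_swap, add_sub_cancel_left]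

theorem bracket_smul_left (h : IsAlmostCourant P ρ br D) (f : R) (u v : M) :
    br (f • u) v = f • br u v + D (f * P u v) - f • D (P u v) - ρ v f • u := by
  rw [h.bracket_swap v, map_smul, smul_eq_mul, h.bracket_smul_right,
    h.bracket_swap u, h.pairing_symm]
  module

theorem pairing_D_left (h : IsAlmostCourant P ρ br D) (f : R) (u : M) : P (D f) u = ρ u f := by
  rw [h.pairing_symm, h.pairing_D]

theorem bracket_D_right (h : IsAlmostCourant P ρ br D) (hsep : ∀ u, (∀ v, P u v = 0) → u = 0)
    (hρbr : ∀ u v f, ρ (br u v) f = ρ u (ρ v f) - ρ v (ρ u f)) (u : M) (f : R) :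
    br u (D f) = D (ρ u f) := by
  refine sub_eq_zero.mp (hsep _ fun w => ?_)
  have := h.anchor_pairing u (D f) w
  rw [h.pairing_D_left, h.pairing_D_left, hρbr] at this
  rw [map_sub, LinearMap.sub_apply, h.pairing_D_left]
  linear_combination -this

theorem bracket_D_left (h : IsAlmostCourant P ρ br D) (hsep : ∀ u, (∀ v, P u v = 0) → u = 0)
    (hρbr : ∀ u v f, ρ (br u v) f = ρ u (ρ v f) - ρ v (ρ u f)) (f : R) (u : M) :
    br (D f) u = 0 := by
  have := h.bracket_add_bracket_swap (D f) u
  rwa [h.bracket_D_right hsep hρbr, h.pairing_D_left, add_eq_right] at this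

end IsAlmostCourant

variable (br) in
def jacobiator (u v w : M) : M := br u (br v w) - br (br u v) w - br v (br u w)

theorem jacobiator_add_left (u u' v w : M) :
    jacobiator br (u + u') v w = jacobiator br u v w + jacobiator br u' v w := by
  simp only [jacobiator, map_add, LinearMap.add_apply]; abel

theorem jacobiator_add_middle (u v v' w : M) :
    jacobiator br u (v + v') w = jacobiator br u v w + jacobiator br u v' w := by
  simp only [jacobiator, map_add, LinearMap.add_apply]; abel

theorem jacobiator_add_right (u v w w' : M) :
    jacobiator br u v (w + w') = jacobiator br u v w + jacobiator br u v w' := by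
  simp only [jacobiator, map_add]; abel

namespace IsAlmostCourant

theorem jacobiator_smul_right (h : IsAlmostCourant P ρ br D)
    (hρbr : ∀ u v f, ρ (br u v) f = ρ u (ρ v f) - ρ v (ρ u f)) (u v w : M) (f : R) :
    jacobiator br u v (f • w) = f • jacobiator br u v w := by
  simp only [jacobiator, h.bracket_smul_right, map_add, hρbr]
  module

theorem jacobiator_swap (h : IsAlmostCourant P ρ br D) (hsep : ∀ u, (∀ v, P u v = 0) → u = 0)
    (hρbr : ∀ u v f, ρ (br u v) f = ρ u (ρ v f) - ρ v (ρ u f)) (u v w : M) :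
    jacobiator br u v w = -jacobiator br v u w := by
  have : br (br u v) w + br (br v u) w = 0 := by
    rw [← LinearMap.add_apply, ← map_add, h.bracket_add_bracket_swap, h.bracket_D_left hsep hρbr]
  simp only [jacobiator]
  linear_combination (norm := module) -this

theorem jacobiator_smul_middle (h : IsAlmostCourant P ρ br D)
    (hsep : ∀ u, (∀ v, P u v = 0) → u = 0)
    (hρbr : ∀ u v f, ρ (br u v) f = ρ u (ρ v f) - ρ v (ρ u f)) (u v w : M) (f : R) :
    jacobiator br u (f • v) w = f • jacobiator br u v w := by
  simp only [jacobiator, h.bracket_smul_left, h.bracket_smul_right, map_add, map_sub,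
    LinearMap.add_apply, h.bracket_D_right hsep hρbr, hρbr,
    h.anchor_pairing, map_mul_of_separating h.pairing_symm hsep h.pairing_D]
  simp only [smul_add, smul_sub, add_smul, sub_smul]
  abel

theorem jacobiator_smul_left (h : IsAlmostCourant P ρ br D) (hsep : ∀ u, (∀ v, P u v = 0) → u = 0)
    (hρbr : ∀ u v f, ρ (br u v) f = ρ u (ρ v f) - ρ v (ρ u f)) (u v w : M) (f : R) :
    jacobiator br (f • u) v w = f • jacobiator br u v w := by
  rw [h.jacobiator_swap hsep hρbr, h.jacobiator_smul_middle hsep hρbr,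
    h.jacobiator_swap hsep hρbr v, smul_neg, neg_neg]

end IsAlmostCourant

end AlmostCourant

namespace CourantBaseChange

open TensorProduct

variable {k O E O' : Type*} [CommRing k] [CommRing O] [AddCommGroup E] [Module k E] [Module O E]
  [CommRing O'] [Algebra k O'] [Algebra O O'] {P : E →ₗ[O] E →ₗ[O] O} {br : E →ₗ[k] E →ₗ[k] E}
  {P' : (O' ⊗[O] E) →ₗ[O'] (O' ⊗[O] E) →ₗ[O'] O'} {ρhat : E →ₗ[k] Derivation k O' O'}
  {ρ' : (O' ⊗[O] E) →ₗ[O'] Derivation k O' O'} {D' : O' →ₗ[k] O' ⊗[O] E}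

variable (P br ρhat D') in
def tmulBracket (a : O') (u : E) (b : O') (v : E) : O' ⊗[O] E :=
  (a * b) • ((1 : O') ⊗ₜ[O] br u v) + (a * ρhat u b) • ((1 : O') ⊗ₜ[O] v)
    - (b * ρhat v a) • ((1 : O') ⊗ₜ[O] u) + (b * algebraMap O O' (P u v)) • D' a

theorem tmulBracket_add_left (a a' : O') (u : E) (b : O') (v : E) :
    tmulBracket P br ρhat D' (a + a') u b v =
      tmulBracket P br ρhat D' a u b v + tmulBracket P br ρhat D' a' u b v := by
  simp only [tmulBracket, map_add, mul_add, add_mul, add_smul, smul_add]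
  abel

theorem tmulBracket_add_middle (a : O') (u u' : E) (b : O') (v : E) :
    tmulBracket P br ρhat D' a (u + u') b v =
      tmulBracket P br ρhat D' a u b v + tmulBracket P br ρhat D' a u' b v := by
  simp only [tmulBracket, map_add, Derivation.add_apply, LinearMap.add_apply, mul_add,
    tmul_add, add_smul, smul_add]
  abel

theorem tmulBracket_add_right (a : O') (u : E) (b b' : O') (v : E) :
    tmulBracket P br ρhat D' a u (b + b') v =
      tmulBracket P br ρhat D' a u b v + tmulBracket P br ρhat D' a u b' v := by
  simp only [tmulBracket, map_add, mul_add, add_mul, add_smul]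
  abel

theorem tmulBracket_add_last (a : O') (u : E) (b : O') (v v' : E) :
    tmulBracket P br ρhat D' a u b (v + v') =
      tmulBracket P br ρhat D' a u b v + tmulBracket P br ρhat D' a u b v' := by
  simp only [tmulBracket, map_add, Derivation.add_apply, mul_add,
    tmul_add, add_smul, smul_add]
  abel

theorem tmulBracket_smul_left (c : k) (a : O') (u : E) (b : O') (v : E) :
    tmulBracket P br ρhat D' (c • a) u b v = c • tmulBracket P br ρhat D' a u b v := by
  simp only [tmulBracket, map_smul, Derivation.map_smul, smul_mul_assoc, mul_smul_comm, smul_assoc]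
  module

theorem tmulBracket_smul_right (c : k) (a : O') (u : E) (b : O') (v : E) :
    tmulBracket P br ρhat D' a u (c • b) v = c • tmulBracket P br ρhat D' a u b v := by
  simp only [tmulBracket, Derivation.map_smul, smul_mul_assoc, mul_smul_comm, smul_assoc]
  module

variable {br' : (O' ⊗[O] E) →ₗ[k] (O' ⊗[O] E) →ₗ[k] (O' ⊗[O] E)}

theorem bracket_smul_right
    (hB : ∀ a u b v, br' (a ⊗ₜ u) (b ⊗ₜ v) = tmulBracket P br ρhat D' a u b v)
    (hρ' : ∀ a u, ρ' (a ⊗ₜ[O] u) = a • ρhat u) (x y : O' ⊗[O] E) (c : O') :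
    br' x (c • y) = c • br' x y + ρ' x c • y := by
  induction x using TensorProduct.induction_on with
  | zero => simp
  | add x x' hx hx' =>
    simp only [map_add, LinearMap.add_apply, Derivation.add_apply, hx, hx', add_smul, smul_add]
    abel
  | tmul a u =>
    induction y using TensorProduct.induction_on with
    | zero => simp
    | add y y' hy hy' =>
      simp only [smul_add, map_add, hy, hy']
      abel
    | tmul b v =>
      rw [smul_tmul', smul_eq_mul, hB, hB, tmul_eq_smul_one_tmul b, hρ']
      simp only [tmulBracket, Derivation.leibniz, Derivation.smul_apply, smul_eq_mul]
      module

theorem anchor_bracket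
    (hB : ∀ a u b v, br' (a ⊗ₜ u) (b ⊗ₜ v) = tmulBracket P br ρhat D' a u b v)
    (hρhat₂ : ∀ u v g, ρhat (br u v) g = ρhat u (ρhat v g) - ρhat v (ρhat u g))
    (hρ' : ∀ a u, ρ' (a ⊗ₜ[O] u) = a • ρhat u) (hD'coiso : ∀ c, ρ' (D' c) = 0)
    (x y : O' ⊗[O] E) (c : O') : ρ' (br' x y) c = ρ' x (ρ' y c) - ρ' y (ρ' x c) := by
  induction x using TensorProduct.induction_on with
  | zero => simp
  | add x x' hx hx' =>
    simp only [map_add, LinearMap.add_apply, Derivation.add_apply, hx, hx']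
    ring
  | tmul a u =>
    induction y using TensorProduct.induction_on with
    | zero => simp
    | add y y' hy hy' =>
      simp only [map_add, Derivation.add_apply, hy, hy']
      ring
    | tmul b v =>
      simp only [hB, tmulBracket, map_add, map_sub, map_smul, Derivation.add_apply,
        Derivation.sub_apply, Derivation.smul_apply, hρ', hD'coiso, hρhat₂, Derivation.leibniz,
        Derivation.zero_apply, smul_eq_mul, one_smul]
      ring

theorem bracket_one_tmul_one_tmul
    (hB : ∀ a u b v, br' (a ⊗ₜ u) (b ⊗ₜ v) = tmulBracket P br ρhat D' a u b v)
    (hD'mul : ∀ c d, D' (c * d) = c • D' d + d • D' c) (u v : E) :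
    br' ((1 : O') ⊗ₜ u) ((1 : O') ⊗ₜ v) = (1 : O') ⊗ₜ br u v := by
  have hD'one : D' 1 = 0 := by simpa using hD'mul 1 1
  simp [hB, tmulBracket, hD'one]

theorem jacobiator_eq_zero (hJac : ∀ u v w, br u (br v w) = br (br u v) w + br v (br u w))
    (hB : ∀ a u b v, br' (a ⊗ₜ u) (b ⊗ₜ v) = tmulBracket P br ρhat D' a u b v)
    (hbr' : IsAlmostCourant P' ρ' br' D') (hsep' : ∀ x, (∀ y, P' x y = 0) → x = 0)
    (hρ'br : ∀ x y c, ρ' (br' x y) c = ρ' x (ρ' y c) - ρ' y (ρ' x c)) (x y z : O' ⊗[O] E) :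
    jacobiator br' x y z = 0 := by
  have hD'mul := map_mul_of_separating hbr'.pairing_symm hsep' hbr'.pairing_D
  refine eq_zero_of_one_tmul_eq_zero (g := (jacobiator br' · y z)) (jacobiator_add_left · · y z)
    (fun a x => hbr'.jacobiator_smul_left hsep' hρ'br x y z a) (fun u => ?_) x
  refine eq_zero_of_one_tmul_eq_zero (g := (jacobiator br' _ · z)) (jacobiator_add_middle _ · · z)
    (fun a y => hbr'.jacobiator_smul_middle hsep' hρ'br _ y z a) (fun v => ?_) y
  refine eq_zero_of_one_tmul_eq_zero (g := jacobiator br' _ _) (jacobiator_add_right _ _)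
    (fun a z => hbr'.jacobiator_smul_right hρ'br _ _ z a) (fun w => ?_) z
  simp only [jacobiator, bracket_one_tmul_one_tmul hB hD'mul]
  rw [← tmul_sub, ← tmul_sub, hJac, sub_sub, sub_self, tmul_zero]

variable [Algebra k O] {ρ : E →ₗ[O] Derivation k O O} {D : O →ₗ[k] E}

theorem D'_algebraMap (hPD : ∀ u f, P u (D f) = ρ u f)
    (hP' : ∀ (a b : O') (u v : E), P' (a ⊗ₜ[O] u) (b ⊗ₜ[O] v) = a * b * algebraMap O O' (P u v))
    (hsymm' : ∀ x y, P' x y = P' y x) (hsep' : ∀ x, (∀ y, P' x y = 0) → x = 0)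
    (hρhat₃ : ∀ u f, ρhat u (algebraMap O O' f) = algebraMap O O' (ρ u f))
    (hρ' : ∀ a u, ρ' (a ⊗ₜ[O] u) = a • ρhat u) (hD'pair : ∀ x c, P' x (D' c) = ρ' x c)
    (f : O) : D' (algebraMap O O' f) = (1 : O') ⊗ₜ[O] D f := by
  refine eq_of_forall_tmul_eq P' hsep' fun c w => ?_
  rw [hsymm', hD'pair, hρ', hsymm', hP', hPD, Derivation.smul_apply, hρhat₃, smul_eq_mul, mul_one]

theorem tmulBracket_smul_tmul (hLeib : ∀ u v (f : O), br u (f • v) = f • br u v + ρ u f • v)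
    (hρhat₁ : ∀ (f : O) u, ρhat (f • u) = algebraMap O O' f • ρhat u)
    (hρhat₃ : ∀ u f, ρhat u (algebraMap O O' f) = algebraMap O O' (ρ u f))
    (f : O) (a : O') (u : E) (b : O') (v : E) :
    tmulBracket P br ρhat D' a u (f • b) v = tmulBracket P br ρhat D' a u b (f • v) := by
  simp only [tmulBracket, Algebra.smul_def, Derivation.leibniz, hρhat₃, hLeib, hρhat₁,
    Derivation.smul_apply, map_smul, tmul_add, tmul_smul_eq_algebraMap_smul, smul_add]
  module

theorem tmulBracket_tmul_smul (hE : IsAlmostCourant P ρ br D)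
    (hρhat₁ : ∀ (f : O) u, ρhat (f • u) = algebraMap O O' f • ρhat u)
    (hρhat₃ : ∀ u f, ρhat u (algebraMap O O' f) = algebraMap O O' (ρ u f))
    (hD'alg : ∀ f, D' (algebraMap O O' f) = (1 : O') ⊗ₜ[O] D f)
    (hD'mul : ∀ c d, D' (c * d) = c • D' d + d • D' c) (f : O) (a : O') (u : E) (b : O') (v : E) :
    tmulBracket P br ρhat D' (f • a) u b v = tmulBracket P br ρhat D' a (f • u) b v := by
  have hD (g h : O) : (1 : O') ⊗ₜ[O] D (g * h) =
      algebraMap O O' g • ((1 : O') ⊗ₜ[O] D h) + algebraMap O O' h • ((1 : O') ⊗ₜ[O] D g) := by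
    rw [← hD'alg, ← hD'alg, ← hD'alg, map_mul, hD'mul]
  simp only [tmulBracket, Algebra.smul_def, Derivation.leibniz, hρhat₃, hE.bracket_smul_left,
    hρhat₁, Derivation.smul_apply, map_smul, LinearMap.smul_apply, tmul_add, tmul_sub,
    tmul_smul_eq_algebraMap_smul, hD, hD'mul, hD'alg, smul_add, smul_sub]
  module

theorem exists_bracket_tmul (hE : IsAlmostCourant P ρ br D)
    (hρhat₁ : ∀ (f : O) u, ρhat (f • u) = algebraMap O O' f • ρhat u)
    (hρhat₃ : ∀ u f, ρhat u (algebraMap O O' f) = algebraMap O O' (ρ u f))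
    (hD'alg : ∀ f, D' (algebraMap O O' f) = (1 : O') ⊗ₜ[O] D f)
    (hD'mul : ∀ c d, D' (c * d) = c • D' d + d • D' c) :
    ∃ br' : (O' ⊗[O] E) →ₗ[k] (O' ⊗[O] E) →ₗ[k] (O' ⊗[O] E),
      ∀ a u b v, br' (a ⊗ₜ u) (b ⊗ₜ v) = tmulBracket P br ρhat D' a u b v := by
  let bracketLeft (a : O') (u : E) : O' ⊗[O] E →ₗ[k] O' ⊗[O] E :=
    liftBalanced (tmulBracket P br ρhat D' a u) (fun b b' v => tmulBracket_add_right a u b b' v)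
      (fun b v v' => tmulBracket_add_last a u b v v') (fun c b v => tmulBracket_smul_right c a u b v)
      (fun f b v => tmulBracket_smul_tmul hE.bracket_smul_right hρhat₁ hρhat₃ f a u b v)
  refine ⟨liftBalanced bracketLeft
    (fun a a' u => linearMap_ext_tmul fun b v => tmulBracket_add_left a a' u b v)
    (fun a u u' => linearMap_ext_tmul fun b v => tmulBracket_add_middle a u u' b v)
    (fun c a u => linearMap_ext_tmul fun b v => tmulBracket_smul_left c a u b v)
    (fun f a u => linearMap_ext_tmul fun b v =>
      tmulBracket_tmul_smul hE hρhat₁ hρhat₃ hD'alg hD'mul f a u b v),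
    fun a u b v => by simp only [liftBalanced_tmul, bracketLeft]⟩

theorem bracket_add_bracket_swap (hE : IsAlmostCourant P ρ br D)
    (hB : ∀ a u b v, br' (a ⊗ₜ u) (b ⊗ₜ v) = tmulBracket P br ρhat D' a u b v)
    (hP' : ∀ (a b : O') (u v : E), P' (a ⊗ₜ[O] u) (b ⊗ₜ[O] v) = a * b * algebraMap O O' (P u v))
    (hD'alg : ∀ f, D' (algebraMap O O' f) = (1 : O') ⊗ₜ[O] D f)
    (hD'mul : ∀ c d, D' (c * d) = c • D' d + d • D' c) (x y : O' ⊗[O] E) :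
    br' x y + br' y x = D' (P' x y) := by
  induction x using TensorProduct.induction_on with
  | zero => simp
  | add x x' hx hx' =>
    simp only [map_add, LinearMap.add_apply, ← hx, ← hx']
    abel
  | tmul a u =>
    induction y using TensorProduct.induction_on with
    | zero => simp
    | add y y' hy hy' =>
      simp only [map_add, LinearMap.add_apply, ← hy, ← hy']
      abel
    | tmul b v =>
      rw [hB, hB, hP', tmulBracket, tmulBracket, hE.bracket_swap u v, tmul_sub, hE.pairing_symm v u,
        hD'mul, hD'mul, hD'alg]
      module

theorem anchor_pairing (hE : IsAlmostCourant P ρ br D)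
    (hB : ∀ a u b v, br' (a ⊗ₜ u) (b ⊗ₜ v) = tmulBracket P br ρhat D' a u b v)
    (hP' : ∀ (a b : O') (u v : E), P' (a ⊗ₜ[O] u) (b ⊗ₜ[O] v) = a * b * algebraMap O O' (P u v))
    (hsymm' : ∀ x y, P' x y = P' y x)
    (hρhat₃ : ∀ u f, ρhat u (algebraMap O O' f) = algebraMap O O' (ρ u f))
    (hρ' : ∀ a u, ρ' (a ⊗ₜ[O] u) = a • ρhat u) (hD'pair : ∀ x c, P' x (D' c) = ρ' x c)
    (x y z : O' ⊗[O] E) : ρ' x (P' y z) = P' (br' x y) z + P' y (br' x z) := by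
  induction x using TensorProduct.induction_on with
  | zero => simp
  | add x x' hx hx' =>
    simp only [map_add, LinearMap.add_apply, Derivation.add_apply, hx, hx']
    ring
  | tmul a u =>
    induction y using TensorProduct.induction_on with
    | zero => simp
    | add y y' hy hy' =>
      simp only [map_add, LinearMap.add_apply, hy, hy']
      ring
    | tmul b v =>
      induction z using TensorProduct.induction_on with
      | zero => simp
      | add z z' hz hz' =>
        simp only [map_add, hz, hz']
        ring
      | tmul c w =>
        rw [hB, hB, hP', tmulBracket, tmulBracket]
        simp only [map_add, map_sub, map_smul, LinearMap.add_apply, LinearMap.sub_apply,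
          LinearMap.smul_apply, smul_eq_mul, hP', hρ', hsymm' (D' _), hD'pair,
          Derivation.smul_apply, Derivation.leibniz, hρhat₃, hE.anchor_pairing]
        rw [hE.pairing_symm v u]
        ring

theorem isAlmostCourant (hE : IsAlmostCourant P ρ br D)
    (hB : ∀ a u b v, br' (a ⊗ₜ u) (b ⊗ₜ v) = tmulBracket P br ρhat D' a u b v)
    (hP' : ∀ (a b : O') (u v : E), P' (a ⊗ₜ[O] u) (b ⊗ₜ[O] v) = a * b * algebraMap O O' (P u v))
    (hsymm' : ∀ x y, P' x y = P' y x)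
    (hρhat₃ : ∀ u f, ρhat u (algebraMap O O' f) = algebraMap O O' (ρ u f))
    (hρ' : ∀ a u, ρ' (a ⊗ₜ[O] u) = a • ρhat u) (hD'pair : ∀ x c, P' x (D' c) = ρ' x c)
    (hD'alg : ∀ f, D' (algebraMap O O' f) = (1 : O') ⊗ₜ[O] D f)
    (hD'mul : ∀ c d, D' (c * d) = c • D' d + d • D' c) : IsAlmostCourant P' ρ' br' D' :=
  ⟨hsymm', hD'pair, bracket_smul_right hB hρ', bracket_add_bracket_swap hE hB hP' hD'alg hD'mul,
    anchor_pairing hE hB hP' hsymm' hρhat₃ hρ' hD'pair⟩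

end CourantBaseChange

open CourantBaseChange

open scoped TensorProduct in
theorem courant_extension_of_scalars_existence_general
    {k : Type*} [CommRing k] {O : Type*} [CommRing O] [Algebra k O]
    {E : Type*} [AddCommGroup E] [Module k E] [Module O E]
    (P : E →ₗ[O] E →ₗ[O] O) (ρ : E →ₗ[O] Derivation k O O)
    (br : E →ₗ[k] E →ₗ[k] E) (D : O →ₗ[k] E)
    (hsymm : ∀ u v : E, P u v = P v u)
    (hPD : ∀ (u : E) (f : O), P u (D f) = ρ u f)
    (hLeib : ∀ (u v : E) (f : O), br u (f • v) = f • br u v + ρ u f • v)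
    (hAnti : ∀ u v : E, br u v + br v u = D (P u v))
    (hCompat : ∀ u v w : E, ρ u (P v w) = P (br u v) w + P v (br u w))
    (hJac : ∀ u v w : E, br u (br v w) = br (br u v) w + br v (br u w))
    {O' : Type*} [CommRing O'] [Algebra k O'] [Algebra O O']
    (P' : (O' ⊗[O] E) →ₗ[O'] (O' ⊗[O] E) →ₗ[O'] O')
    (hP' : ∀ (a b : O') (u v : E),
      P' (a ⊗ₜ[O] u) (b ⊗ₜ[O] v) = a * b * algebraMap O O' (P u v))
    (hsymm' : ∀ x y : O' ⊗[O] E, P' x y = P' y x)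
    (hsep' : ∀ x : O' ⊗[O] E, (∀ y : O' ⊗[O] E, P' x y = 0) → x = 0)
    (ρhat : E →ₗ[k] Derivation k O' O')
    (hρhat₁ : ∀ (f : O) (u : E), ρhat (f • u) = algebraMap O O' f • ρhat u)
    (hρhat₂ : ∀ (u v : E) (g : O'),
      ρhat (br u v) g = ρhat u (ρhat v g) - ρhat v (ρhat u g))
    (hρhat₃ : ∀ (u : E) (f : O), ρhat u (algebraMap O O' f) = algebraMap O O' (ρ u f))
    (ρ' : (O' ⊗[O] E) →ₗ[O'] Derivation k O' O')
    (hρ' : ∀ (a : O') (u : E), ρ' (a ⊗ₜ[O] u) = a • ρhat u)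
    (D' : O' →ₗ[k] O' ⊗[O] E)
    (hD'pair : ∀ (x : O' ⊗[O] E) (c : O'), P' x (D' c) = ρ' x c)
    (hD'coiso : ∀ c : O', ρ' (D' c) = 0) :
    ∃ br' : (O' ⊗[O] E) →ₗ[k] (O' ⊗[O] E) →ₗ[k] (O' ⊗[O] E),
      (∀ (a b : O') (u v : E),
        br' (a ⊗ₜ[O] u) (b ⊗ₜ[O] v) =
          (a * b) ⊗ₜ[O] br u v + (a * ρhat u b) • ((1 : O') ⊗ₜ[O] v)
            - (b * ρhat v a) • ((1 : O') ⊗ₜ[O] u)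
            + (b * algebraMap O O' (P u v)) • D' a) ∧
      (∀ (x y : O' ⊗[O] E) (c : O'), br' x (c • y) = c • br' x y + ρ' x c • y) ∧
      (∀ x y : O' ⊗[O] E, br' x y + br' y x = D' (P' x y)) ∧
      (∀ x y z : O' ⊗[O] E, ρ' x (P' y z) = P' (br' x y) z + P' y (br' x z)) ∧
      (∀ x y z : O' ⊗[O] E, br' x (br' y z) = br' (br' x y) z + br' y (br' x z)) ∧
      (∀ u v : E, br' ((1 : O') ⊗ₜ[O] u) ((1 : O') ⊗ₜ[O] v) = (1 : O') ⊗ₜ[O] br u v) := by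
  have hE : IsAlmostCourant P ρ br D := ⟨hsymm, hPD, hLeib, hAnti, hCompat⟩
  have hD'mul := map_mul_of_separating hsymm' hsep' hD'pair
  have hD'alg := D'_algebraMap hPD hP' hsymm' hsep' hρhat₃ hρ' hD'pair
  obtain ⟨br', hB⟩ := exists_bracket_tmul hE hρhat₁ hρhat₃ hD'alg hD'mul
  have hbr' := isAlmostCourant hE hB hP' hsymm' hρhat₃ hρ' hD'pair hD'alg hD'mul
  have hρ'br := anchor_bracket hB hρhat₂ hρ' hD'coiso
  refine ⟨br', fun a b u v => ?_, hbr'.bracket_smul_right, hbr'.bracket_add_bracket_swap,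
    hbr'.anchor_pairing, fun x y z => ?_, bracket_one_tmul_one_tmul hB hD'mul⟩
  · rw [hB, tmulBracket, ← TensorProduct.tmul_eq_smul_one_tmul]
  · rw [← sub_eq_zero, ← sub_sub, ← jacobiator]
    exact jacobiator_eq_zero hJac hB hbr' hsep' hρ'br x y z

open scoped TensorProduct in
theorem courant_extension_of_scalars_existence
    {k : Type*} [CommRing k] {O : Type*} [CommRing O] [Algebra k O]
    {E : Type*} [AddCommGroup E] [Module k E] [Module O E] [IsScalarTower k O E]
    (P : E →ₗ[O] E →ₗ[O] O) (ρ : E →ₗ[O] Derivation k O O)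
    (br : E →ₗ[k] E →ₗ[k] E) (D : O →ₗ[k] E)
    (hsymm : ∀ u v : E, P u v = P v u)
    (hPD : ∀ (u : E) (f : O), P u (D f) = ρ u f)
    (hLeib : ∀ (u v : E) (f : O), br u (f • v) = f • br u v + ρ u f • v)
    (hAnti : ∀ u v : E, br u v + br v u = D (P u v))
    (hCompat : ∀ u v w : E, ρ u (P v w) = P (br u v) w + P v (br u w))
    (hJac : ∀ u v w : E, br u (br v w) = br (br u v) w + br v (br u w))
    {O' : Type*} [CommRing O'] [Algebra k O'] [Algebra O O'] [IsScalarTower k O O']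
    (P' : (O' ⊗[O] E) →ₗ[O'] (O' ⊗[O] E) →ₗ[O'] O')
    (hP' : ∀ (a b : O') (u v : E),
      P' (a ⊗ₜ[O] u) (b ⊗ₜ[O] v) = a * b * algebraMap O O' (P u v))
    (hsymm' : ∀ x y : O' ⊗[O] E, P' x y = P' y x)
    (hsep' : ∀ x : O' ⊗[O] E, (∀ y : O' ⊗[O] E, P' x y = 0) → x = 0)
    (ρhat : E →ₗ[k] Derivation k O' O')
    (hρhat₁ : ∀ (f : O) (u : E), ρhat (f • u) = algebraMap O O' f • ρhat u)
    (hρhat₂ : ∀ (u v : E) (g : O'),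
      ρhat (br u v) g = ρhat u (ρhat v g) - ρhat v (ρhat u g))
    (hρhat₃ : ∀ (u : E) (f : O), ρhat u (algebraMap O O' f) = algebraMap O O' (ρ u f))
    (ρ' : (O' ⊗[O] E) →ₗ[O'] Derivation k O' O')
    (hρ' : ∀ (a : O') (u : E), ρ' (a ⊗ₜ[O] u) = a • ρhat u)
    (D' : O' →ₗ[k] O' ⊗[O] E)
    (hD'pair : ∀ (x : O' ⊗[O] E) (c : O'), P' x (D' c) = ρ' x c)
    (hD'coiso : ∀ c : O', ρ' (D' c) = 0) :
    ∃ br' : (O' ⊗[O] E) →ₗ[k] (O' ⊗[O] E) →ₗ[k] (O' ⊗[O] E),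
      (∀ (a b : O') (u v : E),
        br' (a ⊗ₜ[O] u) (b ⊗ₜ[O] v) =
          (a * b) ⊗ₜ[O] br u v + (a * ρhat u b) • ((1 : O') ⊗ₜ[O] v)
            - (b * ρhat v a) • ((1 : O') ⊗ₜ[O] u)
            + (b * algebraMap O O' (P u v)) • D' a) ∧
      (∀ (x y : O' ⊗[O] E) (c : O'), br' x (c • y) = c • br' x y + ρ' x c • y) ∧
      (∀ x y : O' ⊗[O] E, br' x y + br' y x = D' (P' x y)) ∧
      (∀ x y z : O' ⊗[O] E, ρ' x (P' y z) = P' (br' x y) z + P' y (br' x z)) ∧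
      (∀ x y z : O' ⊗[O] E, br' x (br' y z) = br' (br' x y) z + br' y (br' x z)) ∧
      (∀ u v : E, br' ((1 : O') ⊗ₜ[O] u) ((1 : O') ⊗ₜ[O] v) = (1 : O') ⊗ₜ[O] br u v) :=
  courant_extension_of_scalars_existence_general P ρ br D hsymm hPD hLeib hAnti hCompat hJac P' hP'
    hsymm' hsep' ρhat hρhat₁ hρhat₂ hρhat₃ ρ' hρ' D' hD'pair hD'coiso
end
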